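/- arXiv:2210.00293 — 4 statements merged into one kernel-verified Lean document; each statement's English description precedes it below -/
import Mathlib

section
/- In a finite deterministic MDP with discount factor 0 ≤ γ < 1, a greedy policy with respect to the fixed point of the Bellman optimality operator is optimal: if Q* : S → A → ℝ satisfies T Q* = Q*, and π : S → A satisfies Q* s (π s) = ⨆ a : A, Q* s a for every state s, then V^π s = V* s for every state s. -/
/-!
Let `M s = ⨆ a, Q* s a`. The fixed-point equation reads `Q* s a = r s a + γ * M (step s a)`, and
`Q* s a ≤ M s`. Hence along every trajectory the reward plus the discounted value of the next
state is at most the value of the current state, with equality along the greedy trajectory.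
Since `M` is bounded (`S` is finite), the discounted telescoping sum converges to `M s`, so every
return `G s u` is at most `M s` while the greedy policy attains it: `V^π = M = V*`.
-/

section Discounted

variable {γ : ℝ} (hγ0 : 0 ≤ γ) (hγ1 : γ < 1)
include hγ0 hγ1

theorem summable_pow_mul_of_abs_le {f : ℕ → ℝ} {C : ℝ} (hf : ∀ t, |f t| ≤ C) :
    Summable fun t => γ ^ t * f t :=
  ((summable_geometric_of_lt_one hγ0 hγ1).mul_right C).of_norm_bounded fun t => by
    rw [Real.norm_eq_abs, abs_mul, abs_pow, abs_of_nonneg hγ0]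
    exact mul_le_mul_of_nonneg_left (hf t) (pow_nonneg hγ0 t)

theorem hasSum_pow_mul_sub_pow_succ_mul {m : ℕ → ℝ} {C : ℝ} (hm : ∀ t, |m t| ≤ C) :
    HasSum (fun t => γ ^ t * m t - γ ^ (t + 1) * m (t + 1)) (m 0) := by
  have h := (summable_pow_mul_of_abs_le hγ0 hγ1 hm).hasSum
  have h_shift := (hasSum_nat_add_iff' 1).mpr h
  simpa using h.sub h_shift

theorem tsum_pow_mul_le_of_forall_add_mul_le {c m : ℕ → ℝ} {C D : ℝ} (hc : ∀ t, |c t| ≤ C)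
    (hm : ∀ t, |m t| ≤ D) (h : ∀ t, c t + γ * m (t + 1) ≤ m t) :
    ∑' t, γ ^ t * c t ≤ m 0 :=
  hasSum_le (fun t => calc
      γ ^ t * c t = γ ^ t * (c t + γ * m (t + 1)) - γ ^ (t + 1) * m (t + 1) := by ring
      _ ≤ γ ^ t * m t - γ ^ (t + 1) * m (t + 1) := by gcongr; exact h t)
    (summable_pow_mul_of_abs_le hγ0 hγ1 hc).hasSum (hasSum_pow_mul_sub_pow_succ_mul hγ0 hγ1 hm)

theorem tsum_pow_mul_eq_of_forall_add_mul_eq {c m : ℕ → ℝ} {D : ℝ}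
    (hm : ∀ t, |m t| ≤ D) (h : ∀ t, c t + γ * m (t + 1) = m t) :
    ∑' t, γ ^ t * c t = m 0 := by
  refine HasSum.tsum_eq ?_
  convert hasSum_pow_mul_sub_pow_succ_mul hγ0 hγ1 hm using 2 with t
  rw [← h t]; ring

end Discounted

theorem traj_feedback_eq_iterate {S A : Type*} (step : S → A → S)
    (traj : S → (ℕ → A) → ℕ → S) (htraj0 : ∀ s u, traj s u 0 = s)
    (htrajS : ∀ s u t, traj s u (t + 1) = step (traj s u t) (u t)) (π : S → A) (s : S) :
    traj s (fun t => π ((fun x => step x (π x))^[t] s)) =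
      fun t => (fun x => step x (π x))^[t] s := by
  funext t
  induction t with
  | zero => exact htraj0 _ _
  | succ t ih => rw [htrajS, ih, Function.iterate_succ_apply']

theorem greedy_policy_optimal_general
    {S A : Type*} [Fintype S] [Fintype A]
    (step : S → A → S) (r : S → A → ℝ) (γ : ℝ) (hγ0 : 0 ≤ γ) (hγ1 : γ < 1)
    (traj : S → (ℕ → A) → ℕ → S)
    (htraj0 : ∀ s u, traj s u 0 = s)
    (htrajS : ∀ s u t, traj s u (t + 1) = step (traj s u t) (u t))
    (G : S → (ℕ → A) → ℝ)
    (hG : ∀ s u, G s u = ∑' t : ℕ, γ ^ t * r (traj s u t) (u t))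
    (Vstar : S → ℝ)
    (hVstar : ∀ s : S, Vstar s = ⨆ u : ℕ → A, G s u)
    (T : (S → A → ℝ) → (S → A → ℝ))
    (hT : ∀ Q s a, T Q s a = r s a + γ * ⨆ a' : A, Q (step s a) a')
    (V : (S → A) → S → ℝ)
    (hV : ∀ (π : S → A) (s : S),
      V π s = ∑' t : ℕ, γ ^ t *
        r ((fun x => step x (π x))^[t] s) (π ((fun x => step x (π x))^[t] s)))
    (Qstar : S → A → ℝ) (hfix : T Qstar = Qstar)
    (π : S → A) (hgreedy : ∀ s : S, Qstar s (π s) = ⨆ a : A, Qstar s a) :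
    ∀ s : S, V π s = Vstar s := by
  set M : S → ℝ := fun s => ⨆ a, Qstar s a
  have hQ : ∀ s a, Qstar s a = r s a + γ * M (step s a) := fun s a => by rw [← hT, hfix]
  obtain ⟨C, hC⟩ := Finite.exists_le fun p : S × A => |r p.1 p.2|
  obtain ⟨D, hD⟩ := Finite.exists_le fun s => |M s|
  have hG_le (s : S) (u : ℕ → A) : G s u ≤ M s := by
    calc G s u = ∑' t, γ ^ t * r (traj s u t) (u t) := hG s u
      _ ≤ M (traj s u 0) := by
        refine tsum_pow_mul_le_of_forall_add_mul_le hγ0 hγ1 (m := fun t => M (traj s u t))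
          (fun t => hC (_, _)) (fun t => hD _) fun t => ?_
        rw [htrajS, ← hQ]
        exact le_ciSup (Finite.bddAbove_range _) _
      _ = M s := by rw [htraj0]
  intro s
  have hVπ : V π s = M s := by
    rw [hV]
    refine tsum_pow_mul_eq_of_forall_add_mul_eq hγ0 hγ1
      (m := fun t => M ((fun x => step x (π x))^[t] s)) (fun t => hD _) fun t => ?_
    rw [Function.iterate_succ_apply']
    exact (hQ _ _).symm.trans (hgreedy _)
  have hGπ : G s (fun t => π ((fun x => step x (π x))^[t] s)) = M s := by
    rw [← hVπ, hG, hV, traj_feedback_eq_iterate step traj htraj0 htrajS]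
  rw [hVstar, hVπ]
  have h_greatest : IsGreatest (Set.range (G s)) (M s) :=
    ⟨⟨_, hGπ⟩, by rintro _ ⟨u, rfl⟩; exact hG_le s u⟩
  exact h_greatest.csSup_eq.symm

/-- In a finite deterministic MDP with `0 ≤ γ < 1`, a greedy policy with respect to
the fixed point of the Bellman optimality operator is optimal. -/
theorem greedy_policy_optimal
    {S A : Type*} [Fintype S] [Fintype A] [Nonempty S] [Nonempty A]
    (step : S → A → S) (r : S → A → ℝ) (γ : ℝ) (hγ0 : 0 ≤ γ) (hγ1 : γ < 1)
    (traj : S → (ℕ → A) → ℕ → S)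
    (htraj0 : ∀ s u, traj s u 0 = s)
    (htrajS : ∀ s u t, traj s u (t + 1) = step (traj s u t) (u t))
    (G : S → (ℕ → A) → ℝ)
    (hG : ∀ s u, G s u = ∑' t : ℕ, γ ^ t * r (traj s u t) (u t))
    (Vstar : S → ℝ)
    (hVstar : ∀ s : S, Vstar s = ⨆ u : ℕ → A, G s u)
    (T : (S → A → ℝ) → (S → A → ℝ))
    (hT : ∀ Q s a, T Q s a = r s a + γ * ⨆ a' : A, Q (step s a) a')
    (V : (S → A) → S → ℝ)
    (hV : ∀ (π : S → A) (s : S),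
      V π s = ∑' t : ℕ, γ ^ t *
        r ((fun x => step x (π x))^[t] s) (π ((fun x => step x (π x))^[t] s)))
    (Qstar : S → A → ℝ) (hfix : T Qstar = Qstar)
    (π : S → A) (hgreedy : ∀ s : S, Qstar s (π s) = ⨆ a : A, Qstar s a) :
    ∀ s : S, V π s = Vstar s :=
  greedy_policy_optimal_general step r γ hγ0 hγ1 traj htraj0 htrajS G hG Vstar hVstar T hT V hV
    Qstar hfix π hgreedy
end

section
/- In a finite deterministic MDP with an absorbing zero-reward goal state that every trajectory reaches within m steps, value iteration is exact after m backups: suppose g : S satisfies step g a = g and r g a = 0 for all actions a, suppose traj s u m = g for every state s and every action stream u, and suppose Q* : S → A → ℝ satisfies T Q* = Q*. Then for every Q₀ : S → A → ℝ with Q₀ g a = 0 for all a, one has (T^[m] Q₀) s a = Q* s a for all states s and actions a. -/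
/-- In a finite deterministic MDP with an absorbing zero-reward goal state that every
trajectory reaches within `m` steps, value iteration is exact after `m` backups. -/
theorem value_iteration_exact_with_goal
    {S A : Type*} [Fintype S] [Fintype A] [Nonempty S] [Nonempty A]
    (step : S → A → S) (r : S → A → ℝ) (γ : ℝ) (hγ0 : 0 ≤ γ) (hγ1 : γ < 1)
    (traj : S → (ℕ → A) → ℕ → S)
    (htraj0 : ∀ s u, traj s u 0 = s)
    (htrajS : ∀ s u t, traj s u (t + 1) = step (traj s u t) (u t))
    (T : (S → A → ℝ) → (S → A → ℝ))
    (hT : ∀ Q s a, T Q s a = r s a + γ * ⨆ a' : A, Q (step s a) a')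
    (g : S) (hg_step : ∀ a : A, step g a = g) (hg_r : ∀ a : A, r g a = 0)
    (m : ℕ) (hreach : ∀ (s : S) (u : ℕ → A), traj s u m = g)
    (Qstar : S → A → ℝ) (hfix : T Qstar = Qstar)
    (Q₀ : S → A → ℝ) (hQ₀ : ∀ a : A, Q₀ g a = 0) :
    ∀ (s : S) (a : A), (T^[m] Q₀) s a = Qstar s a := by
  -- Qstar g a = 0
  have hQg : ∀ a : A, Qstar g a = 0 := by
    have h1 : ∀ a : A, Qstar g a = γ * ⨆ a' : A, Qstar g a' := by
      intro a
      have := congrFun (congrFun hfix g) a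
      rw [hT, hg_step, hg_r, zero_add] at this
      exact this.symm
    set M := ⨆ a' : A, Qstar g a' with hM
    have hMc : M = γ * M := by
      have : (⨆ a' : A, Qstar g a') = ⨆ _a' : A, γ * M := by
        exact iSup_congr h1
      rw [← hM, ciSup_const] at this
      exact this
    have hM0 : M = 0 := by nlinarith
    intro a
    rw [h1 a, hM0, mul_zero]
  -- trajectory shift lemma
  have hshift : ∀ (t : ℕ) (s : S) (a : A) (u : ℕ → A),
      traj (step s a) u t = traj s (fun n => Nat.casesOn n a u) (t + 1) := by
    intro t
    induction t with
    | zero => intro s a u; rw [htraj0, htrajS, htraj0]; rfl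
    | succ t ih =>
      intro s a u
      rw [htrajS, htrajS, ← ih s a u]
  -- main induction
  have main : ∀ (k : ℕ) (s : S), (∀ u : ℕ → A, traj s u k = g) →
      ∀ a : A, (T^[k] Q₀) s a = Qstar s a := by
    intro k
    induction k with
    | zero =>
      intro s hs a
      have : s = g := by rw [← htraj0 s (fun _ => a)]; exact hs _
      simp [this, hQ₀, hQg]
    | succ k ih =>
      intro s hs a
      have hs' : ∀ u : ℕ → A, traj (step s a) u k = g := by
        intro u
        rw [hshift]
        exact hs _
      rw [Function.iterate_succ_apply', hT]
      have hsup : (⨆ a' : A, (T^[k] Q₀) (step s a) a') = ⨆ a' : A, Qstar (step s a) a' := by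
        exact iSup_congr (ih (step s a) hs')
      rw [hsup, ← hT Qstar s a, hfix]
  intro s a
  exact main m s (hreach s) a
end

section
/- Reaching the goal of a combination-lock environment forces the action sequence to contain the full code as a consecutive run: fix n ≥ 1, k ≥ 1, a code c : ℕ → Fin k, and actions u : ℕ → Fin k, and let x : ℕ → ℕ be the combination-lock trajectory. If x T = n for some T : ℕ, then there exists t : ℕ with t + n ≤ T such that u (t + i) = c i for every i < n. -/
/-- Reaching the goal of a combination-lock environment forces the action sequence to
contain the full code as a consecutive run. -/
theorem combination_lock_reach_implies_code_run
    (n k : ℕ) (hn : 1 ≤ n) (hk : 1 ≤ k)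
    (c : ℕ → Fin k) (u : ℕ → Fin k)
    (x : ℕ → ℕ) (hx0 : x 0 = 0)
    (hxS : ∀ t : ℕ, x (t + 1) = if n ≤ x t then n else if u t = c (x t) then x t + 1 else 0)
    (T : ℕ) (hgoal : x T = n) :
    ∃ t : ℕ, t + n ≤ T ∧ ∀ i < n, u (t + i) = c i := by
  -- invariant: x t ≤ n
  have hle : ∀ t, x t ≤ n := by
    intro t
    induction t with
    | zero => omega
    | succ t ih =>
      rw [hxS t]
      split
      · exact le_refl n
      · split <;> omega
  -- key lemma
  have L : ∀ t, x t < n → x t ≤ t ∧ ∀ i < x t, x (t - x t + i) = i ∧ u (t - x t + i) = c i := by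
    intro t
    induction t with
    | zero => intro _; exact ⟨by omega, by omega⟩
    | succ t ih =>
      intro h
      have heq := hxS t
      split at heq
      · omega
      · rename_i hlt
        push_neg at hlt
        split at heq
        · rename_i hu
          obtain ⟨h1, h2⟩ := ih hlt
          refine ⟨by omega, ?_⟩
          intro i hi
          have hsub : t + 1 - x (t + 1) = t - x t := by omega
          rw [hsub]
          rcases Nat.lt_or_ge i (x t) with hi' | hi'
          · exact h2 i hi'
          · have : i = x t := by omega
            subst this
            have ht : t - x t + x t = t := by omega
            rw [ht]
            exact ⟨by omega, hu⟩
        · refine ⟨by omega, by omega⟩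
  -- main induction
  induction T with
  | zero => omega
  | succ T ih =>
    rw [hxS T] at hgoal
    split at hgoal
    · rename_i hge
      have : x T = n := le_antisymm (hle T) hge
      obtain ⟨t, ht1, ht2⟩ := ih this
      exact ⟨t, by omega, ht2⟩
    · rename_i hlt
      push_neg at hlt
      split at hgoal
      · rename_i hu
        obtain ⟨h1, h2⟩ := L T hlt
        refine ⟨T - x T, by omega, ?_⟩
        intro i hi
        have hxT : x T = n - 1 := by omega
        rcases Nat.lt_or_ge i (x T) with hi' | hi'
        · exact (h2 i hi').2
        · have : i = x T := by omega
          subst this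
          have ht : T - x T + x T = T := by omega
          rw [ht]
          exact hu
      · omega
end

section
/- Undirected (uniformly random) exploration needs exponentially many steps to solve the combination lock: fix n ≥ 1, k ≥ 1, T with n ≤ T, and a code c : ℕ → Fin k. Under the uniform probability distribution on functions u : Fin T → Fin k, the probability of the event that the combination-lock trajectory driven by the actions u 0, …, u (T−1) satisfies x T = n (i.e., the goal is reached within T steps) is at most (T − n + 1) / k^n. -/
open MeasureTheory

lemma lock_count_aux (n k T s : ℕ) (hsn : s + n ≤ T) (c : ℕ → Fin k) :
    Fintype.card {u : Fin T → Fin k // ∀ i, i < n → ∀ h : s + i < T, u ⟨s + i, h⟩ = c i}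
      = k ^ (T - n) := by
  classical
  have e : {u : Fin T → Fin k // ∀ i, i < n → ∀ h : s + i < T, u ⟨s + i, h⟩ = c i}
      ≃ ({t : Fin T // ¬(s ≤ (t : ℕ) ∧ (t : ℕ) < s + n)} → Fin k) :=
  { toFun := fun u t => u.1 t.1
    invFun := fun w => ⟨fun t => if h : s ≤ (t : ℕ) ∧ (t : ℕ) < s + n
        then c ((t : ℕ) - s) else w ⟨t, h⟩, by
      intro i hi h
      dsimp only
      rw [dif_pos (show s ≤ s + i ∧ s + i < s + n from ⟨by omega, by omega⟩)]
      congr 1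
      omega⟩
    left_inv := by
      intro u
      apply Subtype.ext
      funext t
      dsimp only
      by_cases h : s ≤ (t : ℕ) ∧ (t : ℕ) < s + n
      · rw [dif_pos h]
        have h' : s + ((t : ℕ) - s) < T := by omega
        have h2 := u.2 ((t : ℕ) - s) (by omega) h'
        have ht : (⟨s + ((t : ℕ) - s), h'⟩ : Fin T) = t := Fin.ext (by
          simp only []
          omega)
        rw [ht] at h2
        exact h2.symm
      · rw [dif_neg h]
    right_inv := by
      intro w
      funext t
      dsimp only
      rw [dif_neg t.2] }
  rw [Fintype.card_congr e, Fintype.card_fun, Fintype.card_fin]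
  congr 1
  have h2 : Fintype.card {t : Fin T // s ≤ (t : ℕ) ∧ (t : ℕ) < s + n} = n := by
    have hbij : Function.Bijective (fun i : Fin n =>
        (⟨⟨s + (i : ℕ), by omega⟩, by constructor <;> simp <;> omega⟩ :
          {t : Fin T // s ≤ (t : ℕ) ∧ (t : ℕ) < s + n})) := by
      constructor
      · intro a b hab
        have h' : s + (a : ℕ) = s + (b : ℕ) := congrArg (fun z => z.1.1) hab
        exact Fin.ext (by omega)
      · rintro ⟨t, ht⟩
        refine ⟨⟨(t : ℕ) - s, by omega⟩, ?_⟩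
        apply Subtype.ext
        apply Fin.ext
        simp only []
        omega
    have := Fintype.card_of_bijective hbij
    simpa using this.symm
  rw [Fintype.card_subtype_compl, h2, Fintype.card_fin]

lemma lock_reach (n k T : ℕ) (hn : 1 ≤ n) (hnT : n ≤ T) (c : ℕ → Fin k)
    (x : (Fin T → Fin k) → ℕ → ℕ) (hx0 : ∀ u, x u 0 = 0)
    (hxS : ∀ (u : Fin T → Fin k) (t : ℕ) (ht : t < T),
      x u (t + 1) = if n ≤ x u t then n else if u ⟨t, ht⟩ = c (x u t) then x u t + 1 else 0)
    (u : Fin T → Fin k) (hu : x u T = n) :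
    ∃ s ≤ T - n, ∀ i, i < n → ∀ h : s + i < T, u ⟨s + i, h⟩ = c i := by
  classical
  have hb : ∀ t, t ≤ T → x u t ≤ n ∧ x u t ≤ t := by
    intro t
    induction t with
    | zero => intro _; simp [hx0]
    | succ t ih =>
      intro ht
      have h1 := ih (by omega)
      rw [hxS u t (by omega)]
      split
      · omega
      · split <;> omega
  have hex : ∃ m, x u m = n ∧ m ≤ T := ⟨T, hu, le_rfl⟩
  set m := Nat.find hex with hm
  obtain ⟨hxm, hmT⟩ := Nat.find_spec hex
  rw [← hm] at hxm hmT
  have hmin : ∀ m' < m, ¬(x u m' = n ∧ m' ≤ T) := fun m' hm' => Nat.find_min hex (hm ▸ hm')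
  have hmn : n ≤ m := by
    have := (hb m hmT).2
    omega
  have key : ∀ j, j ≤ n → x u (m - j) = n - j ∧
      (1 ≤ j → ∀ e, m - j = e → ∀ h : e < T, u ⟨e, h⟩ = c (n - j)) := by
    intro j
    induction j with
    | zero =>
      intro _
      rw [Nat.sub_zero, Nat.sub_zero]
      exact ⟨hxm, fun h => absurd h (by omega)⟩
    | succ j ih =>
      intro hj
      have ihx := (ih (by omega)).1
      have ht : m - (j + 1) < T := by omega
      have hstep := hxS u (m - (j + 1)) ht
      have hms : m - (j + 1) + 1 = m - j := by omega
      rw [hms, ihx] at hstep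
      by_cases h1 : n ≤ x u (m - (j + 1))
      · rw [if_pos h1] at hstep
        exfalso
        have hle := (hb (m - (j + 1)) (by omega)).1
        exact hmin (m - (j + 1)) (by omega) ⟨by omega, by omega⟩
      · rw [if_neg h1] at hstep
        by_cases h2 : u ⟨m - (j + 1), ht⟩ = c (x u (m - (j + 1)))
        · rw [if_pos h2] at hstep
          have hx' : x u (m - (j + 1)) = n - (j + 1) := by omega
          refine ⟨hx', fun _ e he h => ?_⟩
          subst he
          rw [← hx']
          exact h2
        · rw [if_neg h2] at hstep
          omega
  refine ⟨m - n, by omega, fun i hi h => ?_⟩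
  have hj := (key (n - i) (by omega)).2 (by omega) (m - n + i) (by omega) h
  have hni : n - (n - i) = i := by omega
  rw [hni] at hj
  exact hj

/-- Undirected (uniformly random) exploration needs exponentially many steps to solve
the combination lock: under the uniform distribution on action sequences
`u : Fin T → Fin k`, the probability that the combination-lock trajectory reaches the
goal `n` within `T` steps is at most `(T - n + 1) / k^n`. -/
theorem uniform_exploration_combination_lock
    (n k T : ℕ) (hn : 1 ≤ n) (hk : 1 ≤ k) (hnT : n ≤ T)
    (c : ℕ → Fin k)
    (x : (Fin T → Fin k) → ℕ → ℕ)
    (hx0 : ∀ u, x u 0 = 0)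
    (hxS : ∀ (u : Fin T → Fin k) (t : ℕ) (ht : t < T),
      x u (t + 1) = if n ≤ x u t then n else if u ⟨t, ht⟩ = c (x u t) then x u t + 1 else 0) :
    haveI : Nonempty (Fin T → Fin k) := ⟨fun _ => ⟨0, hk⟩⟩
    (PMF.uniformOfFintype (Fin T → Fin k)).toMeasure {u | x u T = n} ≤
      ((T - n + 1 : ℕ) : ENNReal) / (k : ENNReal) ^ n := by
  classical
  haveI : Nonempty (Fin T → Fin k) := ⟨fun _ => ⟨0, hk⟩⟩
  set μ := (PMF.uniformOfFintype (Fin T → Fin k)).toMeasure with hμ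
  have hmeas : ∀ S : Set (Fin T → Fin k), MeasurableSet S := fun S => S.toFinite.measurableSet
  set B : ℕ → Set (Fin T → Fin k) :=
    fun s => {u | ∀ i, i < n → ∀ h : s + i < T, u ⟨s + i, h⟩ = c i} with hB
  have hk0 : (k : ENNReal) ≠ 0 := Nat.cast_ne_zero.mpr (by omega)
  have hktop : (k : ENNReal) ≠ ⊤ := ENNReal.natCast_ne_top k
  have hincl : {u | x u T = n} ⊆ ⋃ s ∈ Finset.range (T - n + 1), B s := by
    intro u hu
    obtain ⟨s, hs, hsu⟩ := lock_reach n k T hn hnT c x hx0 hxS u hu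
    exact Set.mem_biUnion (Finset.mem_range.mpr (by omega)) hsu
  have hBs : ∀ s ∈ Finset.range (T - n + 1), μ (B s) = ((k : ENNReal) ^ n)⁻¹ := by
    intro s hs
    have hsn : s + n ≤ T := by
      have := Finset.mem_range.mp hs; omega
    rw [hμ, PMF.toMeasure_apply_fintype]
    have hind : ∀ u : Fin T → Fin k,
        (B s).indicator (⇑(PMF.uniformOfFintype (Fin T → Fin k))) u
        = if u ∈ B s then ((Fintype.card (Fin T → Fin k) : ENNReal))⁻¹ else 0 := by
      intro u
      rw [Set.indicator_apply]
      split <;> simp [PMF.uniformOfFintype_apply]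
    rw [Finset.sum_congr rfl fun u _ => hind u, ← Finset.sum_filter, Finset.sum_const,
      nsmul_eq_mul]
    have hcard : (Finset.univ.filter (· ∈ B s)).card = k ^ (T - n) := by
      rw [← Fintype.card_subtype]
      rw [← lock_count_aux n k T s hsn c]
      exact Fintype.card_congr (Equiv.subtypeEquivRight (fun u => Iff.rfl))
    have hcardα : (Fintype.card (Fin T → Fin k) : ENNReal) = (k : ENNReal) ^ T := by
      rw [Fintype.card_fun, Fintype.card_fin, Fintype.card_fin, Nat.cast_pow]
    rw [hcard, hcardα, Nat.cast_pow]
    calc (k : ENNReal) ^ (T - n) * ((k : ENNReal) ^ T)⁻¹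
        = (k : ENNReal) ^ (T - n) * ((k : ENNReal) ^ (T - n) * (k : ENNReal) ^ n)⁻¹ := by
          rw [← pow_add, Nat.sub_add_cancel hnT]
      _ = ((k : ENNReal) ^ n)⁻¹ := by
          rw [ENNReal.mul_inv (Or.inl (pow_ne_zero _ hk0)) (Or.inl (ENNReal.pow_ne_top hktop)),
            ← mul_assoc, ENNReal.mul_inv_cancel (pow_ne_zero _ hk0) (ENNReal.pow_ne_top hktop),
            one_mul]
  calc μ {u | x u T = n} ≤ μ (⋃ s ∈ Finset.range (T - n + 1), B s) := measure_mono hincl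
    _ ≤ ∑ s ∈ Finset.range (T - n + 1), μ (B s) := measure_biUnion_finset_le _ _
    _ = ∑ s ∈ Finset.range (T - n + 1), ((k : ENNReal) ^ n)⁻¹ := Finset.sum_congr rfl hBs
    _ = ((T - n + 1 : ℕ) : ENNReal) * ((k : ENNReal) ^ n)⁻¹ := by
        rw [Finset.sum_const, Finset.card_range, nsmul_eq_mul]
    _ = ((T - n + 1 : ℕ) : ENNReal) / (k : ENNReal) ^ n := by
        rw [div_eq_mul_inv]
end
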